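/- arXiv:2105.09677 — 2 statements merged into one kernel-verified Lean document; each statement's English description precedes it below -/
import Mathlib

section
/- Let (E,ℰ) be a measurable space and let (P_μ)_{μ∈𝒫(E)} be a nonlinear Markov chain satisfying conditions (C1), (C2) and (C3). Then for any two initial distributions μ₀, ν₀ ∈ 𝒫(E), the marginal distributions μ_n and ν_n satisfy ‖μ_n − ν_n‖_TV ≤ ‖μ₀ − ν₀‖_TV · (1 − α₂ + λ₂)^{⌊n/2⌋} · c_n for all n ∈ ℤ₊, where c_n = 1 + λ₁ if n is odd and c_n = 1 if n is even. -/
open MeasureTheory ProbabilityTheory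

/-- Total variation distance `‖μ − ν‖_TV = 2 sup_{A ∈ ℰ} |μ(A) − ν(A)|`. -/
noncomputable def tvDist {E : Type*} [MeasurableSpace E] (μ ν : Measure E) : ℝ :=
  2 * ⨆ A : {s : Set E // MeasurableSet s}, |(μ A).toReal - (ν A).toReal|

/-- One step of the nonlinear chain: `μ ↦ μ P_μ`, `(νP_μ)(B) = ∫ P_μ(x,B) ν(dx)`. -/
noncomputable def stepMeasure {E : Type*} [MeasurableSpace E]
    (P : Measure E → Kernel E E) (μ : Measure E) : Measure E :=
  μ.bind (fun x => P μ x)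

/-- Two-step transition kernel `Q_μ(x,B) = ∫ P_μ(x,dy) P_{μP_μ}(y,B)`. -/
noncomputable def twoStepKernel {E : Type*} [MeasurableSpace E]
    (P : Measure E → Kernel E E) (μ : Measure E) (x : E) : Measure E :=
  (P μ x).bind (fun y => P (stepMeasure P μ) y)

/-- Marginal distributions `μ_{n+1} = μ_n P_{μ_n}` of the nonlinear Markov chain. -/
noncomputable def marginal {E : Type*} [MeasurableSpace E]
    (P : Measure E → Kernel E E) (μ0 : Measure E) : ℕ → Measure E
  | 0 => μ0
  | n + 1 => stepMeasure P (marginal P μ0 n)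


/-!
Splitting at an intermediate measure, `‖μK − νL‖ ≤ ‖μK − νK‖ + ‖νK − νL‖`. The first term is
Dobrushin's contraction: if `‖K(x,·) − K(y,·)‖ ≤ 2c` for all `x, y`, then `‖μK − νK‖ ≤ c‖μ − ν‖`,
because `x ↦ K(x,B)` oscillates by at most `c` and `μ − ν` has mass at most `‖μ − ν‖/2` on a
Hahn set. The second term is at most `sup_x ‖K(x,·) − L(x,·)‖`. For two steps of the chain
(`K = Q_μ`, `L = Q_ν`) this gives the factor `1 − α₂ + λ₂` by (C1), (C2); for one step
(`K = P_μ`, `L = P_ν`, `c = 1`) the factor `1 + λ₁` by (C3). Iterating the two-step bound and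
finishing with one step when `n` is odd gives the theorem.
-/

section TotalVariation

variable {α : Type*} [MeasurableSpace α]

lemma tvDist_comm (μ ν : Measure α) : tvDist μ ν = tvDist ν μ := by
  simp only [tvDist, abs_sub_comm]

lemma tvDist_nonneg (μ ν : Measure α) : 0 ≤ tvDist μ ν :=
  mul_nonneg zero_le_two (Real.iSup_nonneg fun _ ↦ abs_nonneg _)

lemma tvDist_le_of_forall {μ ν : Measure α} {r : ℝ}
    (h : ∀ A, MeasurableSet A → 2 * |(μ A).toReal - (ν A).toReal| ≤ r) : tvDist μ ν ≤ r := by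
  have : ⨆ A : {s : Set α // MeasurableSet s}, |(μ A).toReal - (ν A).toReal| ≤ r / 2 :=
    ciSup_le fun A ↦ by linarith [h A A.2]
  rw [tvDist]
  linarith

lemma abs_toReal_sub_toReal_le_one (μ ν : Measure α) [IsProbabilityMeasure μ]
    [IsProbabilityMeasure ν] (A : Set α) : |(μ A).toReal - (ν A).toReal| ≤ 1 :=
  abs_sub_le_of_nonneg_of_le ENNReal.toReal_nonneg measureReal_le_one
    ENNReal.toReal_nonneg measureReal_le_one

lemma two_mul_abs_toReal_sub_toReal_le_tvDist (μ ν : Measure α) [IsProbabilityMeasure μ]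
    [IsProbabilityMeasure ν] {A : Set α} (hA : MeasurableSet A) :
    2 * |(μ A).toReal - (ν A).toReal| ≤ tvDist μ ν := by
  have hbdd : BddAbove (Set.range fun A : {s : Set α // MeasurableSet s} ↦
      |(μ A).toReal - (ν A).toReal|) :=
    ⟨1, by rintro _ ⟨A, rfl⟩; exact abs_toReal_sub_toReal_le_one μ ν A⟩
  have := le_ciSup hbdd ⟨A, hA⟩
  rw [tvDist]
  linarith

lemma tvDist_le_two (μ ν : Measure α) [IsProbabilityMeasure μ] [IsProbabilityMeasure ν] :
    tvDist μ ν ≤ 2 :=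
  tvDist_le_of_forall fun A _ ↦ by linarith [abs_toReal_sub_toReal_le_one μ ν A]

lemma tvDist_triangle (μ ρ ν : Measure α) [IsProbabilityMeasure μ] [IsProbabilityMeasure ρ]
    [IsProbabilityMeasure ν] : tvDist μ ν ≤ tvDist μ ρ + tvDist ρ ν :=
  tvDist_le_of_forall fun A hA ↦ by
    linarith [abs_sub_le ((μ A).toReal) ((ρ A).toReal) ((ν A).toReal),
      two_mul_abs_toReal_sub_toReal_le_tvDist μ ρ hA,
      two_mul_abs_toReal_sub_toReal_le_tvDist ρ ν hA]

end TotalVariation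

section HahnBound

variable {α : Type*} [MeasurableSpace α]

/-- Writing `μ, ν` with densities `g, h` w.r.t. `μ + ν`, the set `S = {h ≤ g}` is a Hahn set. -/
lemma exists_integral_sub_integral_le_mul (μ ν : Measure α) [IsFiniteMeasure μ]
    [IsFiniteMeasure ν] {f : α → ℝ} (hf : Measurable f) {c : ℝ} (hf0 : ∀ x, 0 ≤ f x)
    (hfc : ∀ x, f x ≤ c) :
    ∃ S, MeasurableSet S ∧ ∫ x, f x ∂μ - ∫ x, f x ∂ν ≤ c * ((μ S).toReal - (ν S).toReal) := by
  set ξ := μ + ν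
  have hμξ : μ ≪ ξ := Measure.AbsolutelyContinuous.rfl.add_right ν
  have hνξ : ν ≪ ξ := Measure.AbsolutelyContinuous.rfl.add_right' μ
  set g : α → ℝ := fun x ↦ (μ.rnDeriv ξ x).toReal
  set h : α → ℝ := fun x ↦ (ν.rnDeriv ξ x).toReal
  have hg : Integrable g ξ := Measure.integrable_toReal_rnDeriv
  have hh : Integrable h ξ := Measure.integrable_toReal_rnDeriv
  have hf_bdd : ∀ᵐ x ∂ξ, ‖f x‖ ≤ c :=
    ae_of_all _ fun x ↦ by rw [Real.norm_of_nonneg (hf0 x)]; exact hfc x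
  have hgf : Integrable (fun x ↦ g x * f x) ξ := hg.mul_bdd hf.aestronglyMeasurable hf_bdd
  have hhf : Integrable (fun x ↦ h x * f x) ξ := hh.mul_bdd hf.aestronglyMeasurable hf_bdd
  set S := {x | h x ≤ g x}
  have hS : MeasurableSet S :=
    measurableSet_le (Measure.measurable_rnDeriv ν ξ).ennreal_toReal
      (Measure.measurable_rnDeriv μ ξ).ennreal_toReal
  refine ⟨S, hS, ?_⟩
  calc ∫ x, f x ∂μ - ∫ x, f x ∂ν = ∫ x, g x * f x - h x * f x ∂ξ := by
        rw [integral_sub hgf hhf, integral_toReal_rnDeriv_mul hμξ, integral_toReal_rnDeriv_mul hνξ]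
    _ ≤ ∫ x, S.indicator (fun x ↦ c * (g x - h x)) x ∂ξ := by
        refine integral_mono (hgf.sub hhf) (((hg.sub hh).const_mul c).indicator hS) fun x ↦ ?_
        by_cases hx : x ∈ S
        · simp only [Set.indicator_of_mem hx]
          have : h x ≤ g x := hx
          nlinarith [hfc x]
        · simp only [Set.indicator_of_notMem hx]
          have : g x < h x := not_le.mp hx
          nlinarith [hf0 x]
    _ = c * ((μ S).toReal - (ν S).toReal) := by
        rw [integral_indicator hS, integral_const_mul, integral_sub hg.integrableOn hh.integrableOn,
          Measure.setIntegral_toReal_rnDeriv hμξ, Measure.setIntegral_toReal_rnDeriv hνξ]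
        rfl

lemma exists_integral_sub_integral_le_mul_of_mem_Icc (μ ν : Measure α) [IsProbabilityMeasure μ]
    [IsProbabilityMeasure ν] {f : α → ℝ} (hf : Measurable f) {a c : ℝ}
    (hfac : ∀ x, f x ∈ Set.Icc a (a + c)) :
    ∃ S, MeasurableSet S ∧ ∫ x, f x ∂μ - ∫ x, f x ∂ν ≤ c * ((μ S).toReal - (ν S).toReal) := by
  have hf_int : ∀ ρ : Measure α, IsProbabilityMeasure ρ → Integrable f ρ := fun ρ _ ↦
    .of_bound hf.aestronglyMeasurable (max |a| |a + c|)
      (ae_of_all _ fun x ↦ abs_le_max_abs_abs (hfac x).1 (hfac x).2)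
  obtain ⟨S, hS, hle⟩ := exists_integral_sub_integral_le_mul μ ν (c := c) (hf.sub_const a)
    (fun x ↦ sub_nonneg.mpr (hfac x).1) (fun x ↦ by linarith [(hfac x).2])
  refine ⟨S, hS, ?_⟩
  rwa [integral_sub (hf_int μ ‹_›) (integrable_const a), integral_sub (hf_int ν ‹_›)
    (integrable_const a), integral_const, integral_const, probReal_univ, probReal_univ, one_smul,
    sub_sub_sub_cancel_right] at hle

end HahnBound

lemma exists_forall_mem_Icc_of_forall_sub_le {ι : Type*} [Nonempty ι] {F : ι → ℝ} {c : ℝ}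
    (h : ∀ x y, F x - F y ≤ c) : ∃ a, ∀ x, F x ∈ Set.Icc a (a + c) := by
  obtain ⟨x₀⟩ := ‹Nonempty ι›
  have hbdd : BddBelow (Set.range F) := ⟨F x₀ - c, by rintro _ ⟨y, rfl⟩; linarith [h x₀ y]⟩
  refine ⟨⨅ x, F x, fun x ↦ ⟨ciInf_le hbdd x, ?_⟩⟩
  have : F x - c ≤ ⨅ y, F y := le_ciInf fun y ↦ by linarith [h x y]
  linarith

section KernelBind

variable {α β : Type*} [MeasurableSpace α] [MeasurableSpace β]

lemma toReal_bind_apply (μ : Measure α) (k : Kernel α β) [IsFiniteKernel k] {B : Set β}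
    (hB : MeasurableSet B) : ((μ.bind k) B).toReal = ∫ x, (k x B).toReal ∂μ := by
  rw [Measure.bind_apply hB k.aemeasurable,
    integral_toReal (k.measurable_coe hB).aemeasurable (ae_of_all _ fun x ↦ measure_lt_top _ _)]

lemma integrable_toReal_kernel_apply (μ : Measure α) [IsFiniteMeasure μ] (k : Kernel α β)
    [IsMarkovKernel k] {B : Set β} (hB : MeasurableSet B) :
    Integrable (fun x ↦ (k x B).toReal) μ :=
  .of_bound (k.measurable_coe hB).ennreal_toReal.aestronglyMeasurable 1
    (ae_of_all _ fun _ ↦ by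
      rw [Real.norm_of_nonneg ENNReal.toReal_nonneg]; exact measureReal_le_one)

theorem tvDist_bind_le_mul (μ ν : Measure α) [IsProbabilityMeasure μ] [IsProbabilityMeasure ν]
    (k : Kernel α β) [IsMarkovKernel k] {c : ℝ} (hk : ∀ x y, tvDist (k x) (k y) ≤ 2 * c) :
    tvDist (μ.bind k) (ν.bind k) ≤ c * tvDist μ ν := by
  have : Nonempty α := nonempty_of_isProbabilityMeasure μ
  have hc : 0 ≤ c := by
    obtain ⟨x⟩ := this
    linarith [hk x x, tvDist_nonneg (k x) (k x)]
  refine tvDist_le_of_forall fun B hB ↦ ?_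
  set F : α → ℝ := fun x ↦ (k x B).toReal
  have hF : Measurable F := (k.measurable_coe hB).ennreal_toReal
  obtain ⟨a, ha⟩ := exists_forall_mem_Icc_of_forall_sub_le (F := F) fun x y ↦ by
    linarith [le_abs_self (F x - F y), two_mul_abs_toReal_sub_toReal_le_tvDist (k x) (k y) hB,
      hk x y]
  have hdiff : ∀ (μ ν : Measure α) [IsProbabilityMeasure μ] [IsProbabilityMeasure ν],
      2 * (∫ x, F x ∂μ - ∫ x, F x ∂ν) ≤ c * tvDist μ ν := by
    intro μ ν _ _
    obtain ⟨S, hS, hle⟩ := exists_integral_sub_integral_le_mul_of_mem_Icc μ ν hF ha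
    have := two_mul_abs_toReal_sub_toReal_le_tvDist μ ν hS
    nlinarith [le_abs_self ((μ S).toReal - (ν S).toReal)]
  rw [toReal_bind_apply μ k hB, toReal_bind_apply ν k hB]
  have : |∫ x, F x ∂μ - ∫ x, F x ∂ν| ≤ c * tvDist μ ν / 2 := abs_sub_le_iff.mpr
    ⟨by linarith [hdiff μ ν], by linarith [tvDist_comm ν μ ▸ hdiff ν μ]⟩
  linarith

theorem tvDist_bind_le (ν : Measure α) [IsProbabilityMeasure ν] (k₁ k₂ : Kernel α β)
    [IsMarkovKernel k₁] [IsMarkovKernel k₂] {r : ℝ} (h : ∀ x, tvDist (k₁ x) (k₂ x) ≤ r) :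
    tvDist (ν.bind k₁) (ν.bind k₂) ≤ r := by
  refine tvDist_le_of_forall fun B hB ↦ ?_
  rw [toReal_bind_apply ν k₁ hB, toReal_bind_apply ν k₂ hB, ← integral_sub
    (integrable_toReal_kernel_apply ν k₁ hB) (integrable_toReal_kernel_apply ν k₂ hB)]
  have := norm_integral_le_of_norm_le_const (μ := ν) (C := r / 2)
    (f := fun x ↦ (k₁ x B).toReal - (k₂ x B).toReal) (ae_of_all _ fun x ↦ by
    rw [Real.norm_eq_abs]
    linarith [two_mul_abs_toReal_sub_toReal_le_tvDist (k₁ x) (k₂ x) hB, h x])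
  rw [probReal_univ, mul_one, Real.norm_eq_abs] at this
  linarith

theorem tvDist_bind_bind_le (μ ν : Measure α) [IsProbabilityMeasure μ] [IsProbabilityMeasure ν]
    (k l : Kernel α β) [IsMarkovKernel k] [IsMarkovKernel l] {c r : ℝ}
    (hk : ∀ x y, tvDist (k x) (k y) ≤ 2 * c) (hkl : ∀ x, tvDist (k x) (l x) ≤ r) :
    tvDist (μ.bind k) (ν.bind l) ≤ c * tvDist μ ν + r :=
  (tvDist_triangle _ (ν.bind k) _).trans
    (add_le_add (tvDist_bind_le_mul μ ν k hk) (tvDist_bind_le ν k l hkl))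

end KernelBind

lemma le_mul_pow_div_two_mul_ite {d : ℕ → ℝ} {β γ : ℝ} (hβ : 0 ≤ β) (h1 : d 1 ≤ γ * d 0)
    (h2 : ∀ n, d (n + 2) ≤ β * d n) (n : ℕ) :
    d n ≤ d 0 * β ^ (n / 2) * (if Odd n then γ else 1) := by
  induction n using Nat.twoStepInduction with
  | zero => simp
  | one => simpa [mul_comm] using h1
  | more n ih _ =>
    have hdiv : (n + 2) / 2 = n / 2 + 1 := by omega
    have hodd : Odd (n + 2) ↔ Odd n := by simp [Nat.odd_add]
    rw [hdiv, if_congr hodd rfl rfl, pow_succ]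
    calc d (n + 2) ≤ β * d n := h2 n
      _ ≤ β * (d 0 * β ^ (n / 2) * (if Odd n then γ else 1)) := mul_le_mul_of_nonneg_left ih hβ
      _ = d 0 * (β ^ (n / 2) * β) * (if Odd n then γ else 1) := by ring

section NonlinearChain

variable {E : Type*} [MeasurableSpace E] (P : Measure E → Kernel E E)

lemma stepMeasure_stepMeasure (μ : Measure E) :
    stepMeasure P (stepMeasure P μ) = μ.bind (P (stepMeasure P μ) ∘ₖ P μ) := by
  simp only [stepMeasure, Measure.bind_bind (P μ).aemeasurable (P _).aemeasurable]
  rfl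

variable [∀ μ, IsMarkovKernel (P μ)]

instance isProbabilityMeasure_stepMeasure (μ : Measure E) [IsProbabilityMeasure μ] :
    IsProbabilityMeasure (stepMeasure P μ) := by
  unfold stepMeasure
  infer_instance

instance isProbabilityMeasure_marginal (μ0 : Measure E) [IsProbabilityMeasure μ0] (n : ℕ) :
    IsProbabilityMeasure (marginal P μ0 n) := by
  induction n with
  | zero => assumption
  | succ n ih => exact isProbabilityMeasure_stepMeasure P _

theorem tvDist_stepMeasure_le (μ ν : Measure E) [IsProbabilityMeasure μ] [IsProbabilityMeasure ν]
    {lam₁ : ℝ} (hμν : ∀ x, tvDist (P μ x) (P ν x) ≤ lam₁ * tvDist μ ν) :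
    tvDist (stepMeasure P μ) (stepMeasure P ν) ≤ (1 + lam₁) * tvDist μ ν := by
  have := tvDist_bind_bind_le μ ν (P μ) (P ν) (c := 1)
    (fun x y ↦ by linarith [tvDist_le_two (P μ x) (P μ y)]) hμν
  unfold stepMeasure
  linarith

theorem tvDist_stepMeasure_stepMeasure_le (μ ν : Measure E) [IsProbabilityMeasure μ]
    [IsProbabilityMeasure ν] {α₂ lam₂ : ℝ}
    (hQ : ∀ x y, tvDist (twoStepKernel P μ x) (twoStepKernel P μ y) ≤ 2 * (1 - α₂))
    (hQν : ∀ x, tvDist (twoStepKernel P μ x) (twoStepKernel P ν x) ≤ lam₂ * tvDist μ ν) :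
    tvDist (stepMeasure P (stepMeasure P μ)) (stepMeasure P (stepMeasure P ν)) ≤
      (1 - α₂ + lam₂) * tvDist μ ν := by
  rw [stepMeasure_stepMeasure, stepMeasure_stepMeasure, add_mul]
  exact tvDist_bind_bind_le μ ν _ _ hQ hQν

end NonlinearChain

theorem nonlinear_chain_two_initial_distributions_convergence_general
    {E : Type*} [MeasurableSpace E]
    (P : Measure E → Kernel E E) (hP : ∀ μ, IsMarkovKernel (P μ))
    (α₂ lam₁ lam₂ : ℝ) (hα₂1 : α₂ < 1)
    (hlam₂0 : 0 ≤ lam₂)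
    (C1 : ∀ (μ ν : Measure E), IsProbabilityMeasure μ → IsProbabilityMeasure ν →
      ∀ x y : E, tvDist (twoStepKernel P μ x) (twoStepKernel P ν y) ≤ 2 * (1 - α₂))
    (C2 : ∀ (μ ν : Measure E), IsProbabilityMeasure μ → IsProbabilityMeasure ν →
      ∀ x : E, tvDist (twoStepKernel P μ x) (twoStepKernel P ν x) ≤ lam₂ * tvDist μ ν)
    (C3 : ∀ (μ ν : Measure E), IsProbabilityMeasure μ → IsProbabilityMeasure ν →
      ∀ x : E, tvDist (P μ x) (P ν x) ≤ lam₁ * tvDist μ ν)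
    (μ0 ν0 : Measure E) (hμ0 : IsProbabilityMeasure μ0) (hν0 : IsProbabilityMeasure ν0) :
    ∀ n : ℕ,
      tvDist (marginal P μ0 n) (marginal P ν0 n) ≤
        tvDist μ0 ν0 * (1 - α₂ + lam₂) ^ (n / 2) *
          (if Odd n then 1 + lam₁ else 1) :=
  le_mul_pow_div_two_mul_ite (d := fun n ↦ tvDist (marginal P μ0 n) (marginal P ν0 n))
    (by linarith)
    (tvDist_stepMeasure_le P μ0 ν0 (C3 μ0 ν0 hμ0 hν0))
    fun n ↦ tvDist_stepMeasure_stepMeasure_le P _ _ (C1 _ _ inferInstance inferInstance)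
      (C2 _ _ inferInstance inferInstance)

/-- under (C1), (C2), (C3), for any two initial distributions
`‖μ_n − ν_n‖_TV ≤ ‖μ₀ − ν₀‖_TV (1 − α₂ + λ₂)^{⌊n/2⌋} c_n`. -/
theorem nonlinear_chain_two_initial_distributions_convergence
    {E : Type*} [MeasurableSpace E]
    (P : Measure E → Kernel E E) (hP : ∀ μ, IsMarkovKernel (P μ))
    (α₂ lam₁ lam₂ : ℝ) (hα₂0 : 0 < α₂) (hα₂1 : α₂ < 1)
    (hlam₂0 : 0 ≤ lam₂) (hlam₂α : lam₂ ≤ α₂) (hlam₁0 : 0 ≤ lam₁)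
    (C1 : ∀ (μ ν : Measure E), IsProbabilityMeasure μ → IsProbabilityMeasure ν →
      ∀ x y : E, tvDist (twoStepKernel P μ x) (twoStepKernel P ν y) ≤ 2 * (1 - α₂))
    (C2 : ∀ (μ ν : Measure E), IsProbabilityMeasure μ → IsProbabilityMeasure ν →
      ∀ x : E, tvDist (twoStepKernel P μ x) (twoStepKernel P ν x) ≤ lam₂ * tvDist μ ν)
    (C3 : ∀ (μ ν : Measure E), IsProbabilityMeasure μ → IsProbabilityMeasure ν →
      ∀ x : E, tvDist (P μ x) (P ν x) ≤ lam₁ * tvDist μ ν)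
    (μ0 ν0 : Measure E) (hμ0 : IsProbabilityMeasure μ0) (hν0 : IsProbabilityMeasure ν0) :
    ∀ n : ℕ,
      tvDist (marginal P μ0 n) (marginal P ν0 n) ≤
        tvDist μ0 ν0 * (1 - α₂ + lam₂) ^ (n / 2) *
          (if Odd n then 1 + lam₁ else 1) :=
  nonlinear_chain_two_initial_distributions_convergence_general P hP α₂ lam₁ lam₂ hα₂1 hlam₂0 C1 C2
    C3 μ0 ν0 hμ0 hν0
end

section
/- Let (E,ℰ) be a measurable space and let (P_μ)_{μ∈𝒫(E)} be a nonlinear Markov chain whose two-step kernel Q satisfies conditions (C1) and (C2). Then for all μ, ν ∈ 𝒫(E), ‖μQ_μ − νQ_ν‖_TV ≤ ‖μ − ν‖_TV · (1 − α₂ + λ₂ − (λ₂/2)‖μ − ν‖_TV). -/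
open MeasureTheory ProbabilityTheory

/-! Write `μ = m + σ₁` and `ν = m + σ₂` with `σ₁ ⟂ σ₂` (Hahn decomposition), so that both `σᵢ`
have mass `d = ‖μ - ν‖_TV / 2` and the common part `m` has mass `1 - d`. For a measurable `A`,
the difference `μQ_μ(A) - νQ_ν(A)` splits into `∫ (Q_μ(x,A) - Q_ν(x,A)) m(dx)`, bounded by (C2)
by `λ₂ d (1 - d)`, and `∫ Q_μ(x,A) σ₁(dx) - ∫ Q_ν(y,A) σ₂(dy)`, which is `1/d` times the integral
of `Q_μ(x,A) - Q_ν(y,A)` against `σ₁ ⊗ σ₂` and hence bounded by (C1) by `(1 - α₂) d`. -/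

open Set

section
variable {E F : Type*} [MeasurableSpace E] [MeasurableSpace F]

lemma tvDist_eq_two_mul_iSup (μ ν : Measure E) :
    tvDist μ ν = 2 * ⨆ A : {s : Set E // MeasurableSet s}, |μ.real A - ν.real A| := rfl

lemma abs_measureReal_sub_le_tvDist {μ ν : Measure E} [IsFiniteMeasure μ] [IsFiniteMeasure ν]
    {A : Set E} (hA : MeasurableSet A) : |μ.real A - ν.real A| ≤ tvDist μ ν / 2 := by
  have hbdd : BddAbove (range fun B : {s : Set E // MeasurableSet s} => |μ.real B - ν.real B|) := by
    refine ⟨μ.real univ + ν.real univ, ?_⟩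
    rintro _ ⟨B, rfl⟩
    exact abs_sub_le_of_nonneg_of_le measureReal_nonneg
      (le_add_of_le_of_nonneg (measureReal_mono (subset_univ _)) measureReal_nonneg)
      measureReal_nonneg
      (le_add_of_nonneg_of_le measureReal_nonneg (measureReal_mono (subset_univ _)))
  have := le_ciSup hbdd ⟨A, hA⟩
  rw [tvDist_eq_two_mul_iSup]
  linarith

lemma tvDist_le_of_forall_abs_le {μ ν : Measure E} {c : ℝ}
    (h : ∀ A, MeasurableSet A → |μ.real A - ν.real A| ≤ c) : tvDist μ ν ≤ 2 * c := by
  have : Nonempty {s : Set E // MeasurableSet s} := ⟨⟨∅, MeasurableSet.empty⟩⟩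
  have := ciSup_le fun A : {s : Set E // MeasurableSet s} => h A A.2
  rw [tvDist_eq_two_mul_iSup]
  linarith

lemma tvDist_add_add_of_mutuallySingular {m σ₁ σ₂ : Measure E} [IsFiniteMeasure m]
    [IsFiniteMeasure σ₁] [IsFiniteMeasure σ₂] (hσ : σ₁ ⟂ₘ σ₂)
    (hmass : σ₁.real univ = σ₂.real univ) :
    tvDist (m + σ₁) (m + σ₂) = 2 * σ₁.real univ := by
  have hdiff (A : Set E) : (m + σ₁).real A - (m + σ₂).real A = σ₁.real A - σ₂.real A := by
    rw [measureReal_add_apply, measureReal_add_apply]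
    ring
  apply le_antisymm
  · refine tvDist_le_of_forall_abs_le fun A _ => ?_
    rw [hdiff]
    exact abs_sub_le_of_nonneg_of_le measureReal_nonneg (measureReal_mono (subset_univ A))
      measureReal_nonneg (hmass ▸ measureReal_mono (subset_univ A))
  · obtain ⟨S, hS, hσ₁S, hσ₂S⟩ := hσ
    have := abs_measureReal_sub_le_tvDist (μ := m + σ₁) (ν := m + σ₂) hS.compl
    rw [hdiff, measureReal_compl hS, measureReal_def σ₁ S, hσ₁S, measureReal_def σ₂ Sᶜ,
      hσ₂S] at this
    simp only [ENNReal.toReal_zero, sub_zero] at this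
    linarith [abs_of_nonneg (measureReal_nonneg (μ := σ₁) (s := univ))]

lemma exists_common_add_mutuallySingular (μ ν : Measure E) [IsFiniteMeasure μ]
    [IsFiniteMeasure ν] :
    ∃ m σ₁ σ₂ : Measure E, IsFiniteMeasure m ∧ IsFiniteMeasure σ₁ ∧ IsFiniteMeasure σ₂ ∧
      μ = m + σ₁ ∧ ν = m + σ₂ ∧ σ₁ ⟂ₘ σ₂ := by
  obtain ⟨S, hS, hνμ, hμν⟩ := hahn_decomposition μ ν
  have hle₁ : ν.restrict S ≤ μ.restrict S := by
    refine Measure.le_iff.2 fun t ht => ?_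
    rw [Measure.restrict_apply ht, Measure.restrict_apply ht]
    exact hνμ _ (ht.inter hS) inter_subset_right
  have hle₂ : μ.restrict Sᶜ ≤ ν.restrict Sᶜ := by
    refine Measure.le_iff.2 fun t ht => ?_
    rw [Measure.restrict_apply ht, Measure.restrict_apply ht]
    exact hμν _ (ht.inter hS.compl) inter_subset_right
  refine ⟨ν.restrict S + μ.restrict Sᶜ, μ.restrict S - ν.restrict S,
    ν.restrict Sᶜ - μ.restrict Sᶜ, inferInstance, inferInstance, inferInstance, ?_, ?_,
    ⟨Sᶜ, hS.compl, ?_, ?_⟩⟩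
  · conv_lhs => rw [← Measure.restrict_add_restrict_compl (μ := μ) hS,
      ← Measure.sub_add_cancel_of_le hle₁]
    ac_rfl
  · conv_lhs => rw [← Measure.restrict_add_restrict_compl (μ := ν) hS,
      ← Measure.sub_add_cancel_of_le hle₂]
    ac_rfl
  · refine nonpos_iff_eq_zero.1 ((Measure.le_iff'.1 Measure.sub_le Sᶜ).trans ?_)
    simp [Measure.restrict_apply hS.compl]
  · refine nonpos_iff_eq_zero.1 ((Measure.le_iff'.1 Measure.sub_le Sᶜᶜ).trans ?_)
    simp [Measure.restrict_apply hS]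

lemma abs_integral_sub_integral_le_of_forall_abs_sub_le {σ₁ σ₂ : Measure E} [IsFiniteMeasure σ₁]
    [IsFiniteMeasure σ₂] (hmass : σ₁.real univ = σ₂.real univ) {f g : E → ℝ}
    (hf : Integrable f σ₁) (hg : Integrable g σ₂) {b : ℝ} (hb : ∀ x y, |f x - g y| ≤ b) :
    |∫ x, f x ∂σ₁ - ∫ y, g y ∂σ₂| ≤ b * σ₁.real univ := by
  set d := σ₁.real univ
  rcases (measureReal_nonneg : 0 ≤ d).eq_or_lt with hd | hd
  · have h₁ : σ₁ = 0 := by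
      rw [← Measure.measure_univ_eq_zero, ← measureReal_eq_zero_iff, hd]
    have h₂ : σ₂ = 0 := by
      rw [← Measure.measure_univ_eq_zero, ← measureReal_eq_zero_iff, ← hmass, hd]
    rw [show d = 0 from hd.symm, mul_zero]
    simp [h₁, h₂]
  have hdouble : ∫ x, ∫ y, (f x - g y) ∂σ₂ ∂σ₁ = d * (∫ x, f x ∂σ₁ - ∫ y, g y ∂σ₂) := by
    simp_rw [integral_sub (integrable_const _) hg, integral_const, smul_eq_mul, ← hmass]
    rw [integral_sub (hf.const_mul d) (integrable_const _), integral_const_mul, integral_const,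
      smul_eq_mul]
    ring
  have hbound : |∫ x, ∫ y, (f x - g y) ∂σ₂ ∂σ₁| ≤ b * d * d :=
    norm_integral_le_of_norm_le_const <| ae_of_all _ fun x =>
      (norm_integral_le_of_norm_le_const (f := fun y => f x - g y) (ae_of_all _ (hb x))).trans_eq
        (by rw [← hmass])
  rw [hdouble, abs_mul, abs_of_pos hd, mul_comm (b * d)] at hbound
  exact le_of_mul_le_mul_left hbound hd

lemma abs_integral_add_measure_sub_le {m σ₁ σ₂ : Measure E} [IsFiniteMeasure m]
    [IsFiniteMeasure σ₁] [IsFiniteMeasure σ₂] (hmass : σ₁.real univ = σ₂.real univ)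
    {f g : E → ℝ} (hf : Integrable f (m + σ₁)) (hg : Integrable g (m + σ₂)) {a b : ℝ}
    (ha : ∀ x, |f x - g x| ≤ a) (hb : ∀ x y, |f x - g y| ≤ b) :
    |∫ x, f x ∂(m + σ₁) - ∫ x, g x ∂(m + σ₂)| ≤ a * m.real univ + b * σ₁.real univ := by
  rw [integrable_add_measure] at hf hg
  have hm : |∫ x, f x ∂m - ∫ x, g x ∂m| ≤ a * m.real univ := by
    rw [← integral_sub hf.1 hg.1]
    exact norm_integral_le_of_norm_le_const (f := fun x => f x - g x) (ae_of_all _ ha)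
  have hσ := abs_integral_sub_integral_le_of_forall_abs_sub_le hmass hf.2 hg.2 hb
  rw [integral_add_measure hf.1 hf.2, integral_add_measure hg.1 hg.2]
  calc _ = |(∫ x, f x ∂m - ∫ x, g x ∂m) + (∫ x, f x ∂σ₁ - ∫ x, g x ∂σ₂)| := by ring_nf
    _ ≤ _ := (abs_add_le _ _).trans (add_le_add hm hσ)

lemma measureReal_bind_eq_integral (μ : Measure E) (κ : Kernel E F) [IsFiniteKernel κ]
    {A : Set F} (hA : MeasurableSet A) : (μ.bind κ).real A = ∫ x, (κ x).real A ∂μ := by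
  rw [measureReal_def, Measure.bind_apply hA κ.measurable.aemeasurable,
    ← integral_toReal (κ.measurable_coe hA).aemeasurable (ae_of_all _ fun _ => measure_lt_top _ _)]
  rfl

theorem tvDist_bind_le_s7 (κ η : Kernel E F) [IsMarkovKernel κ] [IsMarkovKernel η]
    (μ ν : Measure E) [IsProbabilityMeasure μ] [IsProbabilityMeasure ν] {a b : ℝ}
    (ha : ∀ x, tvDist (κ x) (η x) ≤ a) (hb : ∀ x y, tvDist (κ x) (η y) ≤ b) :
    tvDist (μ.bind κ) (ν.bind η) ≤ a * (1 - tvDist μ ν / 2) + b * (tvDist μ ν / 2) := by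
  obtain ⟨m, σ₁, σ₂, _, _, _, rfl, rfl, hσ⟩ := exists_common_add_mutuallySingular μ ν
  have hμ : m.real univ + σ₁.real univ = 1 := by
    rw [← measureReal_add_apply, probReal_univ]
  have hν : m.real univ + σ₂.real univ = 1 := by
    rw [← measureReal_add_apply, probReal_univ]
  have hmass : σ₁.real univ = σ₂.real univ := by linarith
  rw [tvDist_add_add_of_mutuallySingular hσ hmass]
  refine (tvDist_le_of_forall_abs_le (c := a / 2 * m.real univ + b / 2 * σ₁.real univ)
    fun A hA => ?_).trans_eq (by rw [← hμ]; ring)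
  rw [measureReal_bind_eq_integral _ _ hA, measureReal_bind_eq_integral _ _ hA]
  exact abs_integral_add_measure_sub_le hmass
    (Kernel.IsMarkovKernel.integrable _ κ hA) (Kernel.IsMarkovKernel.integrable _ η hA)
    (fun x => (abs_measureReal_sub_le_tvDist hA).trans (by linarith [ha x]))
    (fun x y => (abs_measureReal_sub_le_tvDist hA).trans (by linarith [hb x y]))

end

lemma twoStepKernel_eq_comp {E : Type*} [MeasurableSpace E] (P : Measure E → Kernel E E)
    (μ : Measure E) : twoStepKernel P μ = ⇑(P (stepMeasure P μ) ∘ₖ P μ) :=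
  funext fun x => (Kernel.comp_apply _ _ x).symm

theorem two_step_contraction_general_general
    {E : Type*} [MeasurableSpace E]
    (P : Measure E → Kernel E E) (hP : ∀ μ, IsMarkovKernel (P μ))
    (α₂ lam₂ : ℝ)
    (C1 : ∀ (μ ν : Measure E), IsProbabilityMeasure μ → IsProbabilityMeasure ν →
      ∀ x y : E, tvDist (twoStepKernel P μ x) (twoStepKernel P ν y) ≤ 2 * (1 - α₂))
    (C2 : ∀ (μ ν : Measure E), IsProbabilityMeasure μ → IsProbabilityMeasure ν →
      ∀ x : E, tvDist (twoStepKernel P μ x) (twoStepKernel P ν x) ≤ lam₂ * tvDist μ ν)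
    (μ ν : Measure E) (hμ : IsProbabilityMeasure μ) (hν : IsProbabilityMeasure ν) :
    tvDist (μ.bind (twoStepKernel P μ)) (ν.bind (twoStepKernel P ν)) ≤
      tvDist μ ν * (1 - α₂ + lam₂ - (lam₂ / 2) * tvDist μ ν) := by
  have hC1 := C1 μ ν hμ hν
  have hC2 := C2 μ ν hμ hν
  simp only [twoStepKernel_eq_comp] at hC1 hC2 ⊢
  exact (tvDist_bind_le_s7 _ _ μ ν hC2 hC1).trans_eq (by ring)

/-- under (C1) and (C2) for the two-step kernel,
`‖μQ_μ − νQ_ν‖_TV ≤ ‖μ − ν‖_TV (1 − α₂ + λ₂ − (λ₂/2)‖μ − ν‖_TV)`. -/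
theorem two_step_contraction_general
    {E : Type*} [MeasurableSpace E]
    (P : Measure E → Kernel E E) (hP : ∀ μ, IsMarkovKernel (P μ))
    (α₂ lam₂ : ℝ) (hα₂0 : 0 < α₂) (hα₂1 : α₂ < 1)
    (hlam₂0 : 0 ≤ lam₂) (hlam₂α : lam₂ ≤ α₂)
    (C1 : ∀ (μ ν : Measure E), IsProbabilityMeasure μ → IsProbabilityMeasure ν →
      ∀ x y : E, tvDist (twoStepKernel P μ x) (twoStepKernel P ν y) ≤ 2 * (1 - α₂))
    (C2 : ∀ (μ ν : Measure E), IsProbabilityMeasure μ → IsProbabilityMeasure ν →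
      ∀ x : E, tvDist (twoStepKernel P μ x) (twoStepKernel P ν x) ≤ lam₂ * tvDist μ ν)
    (μ ν : Measure E) (hμ : IsProbabilityMeasure μ) (hν : IsProbabilityMeasure ν) :
    tvDist (μ.bind (twoStepKernel P μ)) (ν.bind (twoStepKernel P ν)) ≤
      tvDist μ ν * (1 - α₂ + lam₂ - (lam₂ / 2) * tvDist μ ν) :=
  two_step_contraction_general_general P hP α₂ lam₂ C1 C2 μ ν hμ hν
end
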